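/- arXiv:2407.05078 — 2 statements merged into one kernel-verified Lean document; each statement's English description precedes it below -/
import Mathlib

section
/- Let d, k, n ≥ 1 be integers, let ρ be a probability measure on ℝ × ℝ^d × ℝ such that (a, w, b) ↦ |a|(‖w‖₁ + |b|)^k is integrable with B := ∫ |a|(‖w‖₁ + |b|)^k dρ(a, w, b), and let f : ℝ^d → ℝ be measurable with f(x) = ∫ a·σ_k(w·x + b) dρ(a, w, b) for every x ∈ Ω. Then there exist a : Fin n → ℝ, w : Fin n → ℝ^d and b : Fin n → ℝ such that (1/n) Σ_{i=1}^{n} |aᵢ|(‖wᵢ‖₁ + |bᵢ|)^k ≤ B and ∫_Ω ( f(x) − (1/n) Σ_{i=1}^{n} aᵢ σ_k(wᵢ·x + bᵢ) )² dx ≤ B²/n. -/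
open MeasureTheory
open scoped RealInnerProductSpace ENNReal NNReal

/-- The unit cube `Ω = [0,1]^d` in `ℝ^d`. -/
def unitCube (d : ℕ) : Set (EuclideanSpace ℝ (Fin d)) :=
  {x | ∀ i, x i ∈ Set.Icc (0 : ℝ) 1}

/-- The `ℓ¹` norm on `ℝ^d`. -/
def l1Norm {d : ℕ} (w : EuclideanSpace ℝ (Fin d)) : ℝ := ∑ i, |w i|

section Aux

variable {d : ℕ}

lemma l1Norm_nonneg (w : EuclideanSpace ℝ (Fin d)) : 0 ≤ l1Norm w :=
  Finset.sum_nonneg fun _ _ => abs_nonneg _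

lemma l1Norm_continuous : Continuous (l1Norm : EuclideanSpace ℝ (Fin d) → ℝ) :=
  continuous_finset_sum _ fun i _ => (by fun_prop : Continuous fun a : EuclideanSpace ℝ (Fin d) => |a i|)

lemma unitCube_eq (d : ℕ) :
    unitCube d = (MeasurableEquiv.toLp 2 (Fin d → ℝ)).symm ⁻¹'
      (Set.univ.pi fun _ => Set.Icc (0:ℝ) 1) := by
  ext x
  simp [unitCube, MeasurableEquiv.coe_toLp_symm, Set.mem_pi, -Set.pi_univ_Icc]

lemma measurableSet_unitCube (d : ℕ) : MeasurableSet (unitCube d) := by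
  rw [unitCube_eq]
  exact (MeasurableEquiv.toLp 2 (Fin d → ℝ)).symm.measurable
    (MeasurableSet.univ_pi fun _ => measurableSet_Icc)

lemma volume_unitCube (d : ℕ) : volume (unitCube d) = 1 := by
  rw [unitCube_eq,
    (EuclideanSpace.volume_preserving_symm_measurableEquiv_toLp (Fin d)).measure_preimage
      (MeasurableSet.univ_pi fun _ => measurableSet_Icc).nullMeasurableSet]
  rw [volume_pi_pi]; simp

/-- The RePU unit. -/
noncomputable def sigk {d : ℕ} (k : ℕ) (p : ℝ × EuclideanSpace ℝ (Fin d) × ℝ)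
    (x : EuclideanSpace ℝ (Fin d)) : ℝ := (max 0 (⟪p.2.1, x⟫ + p.2.2)) ^ k

/-- The path-norm weight. -/
noncomputable def nrm {d : ℕ} (k : ℕ) (p : ℝ × EuclideanSpace ℝ (Fin d) × ℝ) : ℝ :=
  (l1Norm p.2.1 + |p.2.2|) ^ k

lemma nrm_nonneg (k : ℕ) (p : ℝ × EuclideanSpace ℝ (Fin d) × ℝ) : 0 ≤ nrm k p :=
  pow_nonneg (add_nonneg (l1Norm_nonneg _) (abs_nonneg _)) _

lemma sigk_nonneg (k : ℕ) (p : ℝ × EuclideanSpace ℝ (Fin d) × ℝ) (x) : 0 ≤ sigk k p x :=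
  pow_nonneg (le_max_left _ _) _

lemma sigk_le (k : ℕ) (p : ℝ × EuclideanSpace ℝ (Fin d) × ℝ) {x} (hx : x ∈ unitCube d) :
    sigk k p x ≤ nrm k p := by
  refine pow_le_pow_left₀ (le_max_left _ _) ?_ _
  refine max_le (add_nonneg (l1Norm_nonneg _) (abs_nonneg _)) ?_
  have hinner : ⟪p.2.1, x⟫ ≤ l1Norm p.2.1 := by
    have : ⟪p.2.1, x⟫ = ∑ i, p.2.1 i * x i := by
      simp [PiLp.inner_apply, RCLike.inner_apply, mul_comm]
    rw [this]
    refine Finset.sum_le_sum fun i _ => ?_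
    calc p.2.1 i * x i ≤ |p.2.1 i * x i| := le_abs_self _
    _ = |p.2.1 i| * |x i| := abs_mul _ _
    _ ≤ |p.2.1 i| * 1 := by
        refine mul_le_mul_of_nonneg_left ?_ (abs_nonneg _)
        rcases hx i with ⟨h0, h1⟩
        rw [abs_of_nonneg h0]; exact h1
    _ = |p.2.1 i| := mul_one _
  have hb : p.2.2 ≤ |p.2.2| := le_abs_self _
  unfold l1Norm at *
  linarith

lemma nrm_continuous (k : ℕ) :
    Continuous (nrm k : ℝ × EuclideanSpace ℝ (Fin d) × ℝ → ℝ) :=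
  ((l1Norm_continuous.comp (continuous_snd.fst)).add (continuous_snd.snd.abs)).pow k

set_option maxHeartbeats 1000000 in
lemma sigk_continuous (k : ℕ) :
    Continuous (fun z : (ℝ × EuclideanSpace ℝ (Fin d) × ℝ) × EuclideanSpace ℝ (Fin d) =>
      sigk k z.1 z.2) := by
  unfold sigk
  have h1 : Continuous (fun z : (ℝ × EuclideanSpace ℝ (Fin d) × ℝ) × EuclideanSpace ℝ (Fin d) =>
      (⟪z.1.2.1, z.2⟫ : ℝ)) := by
    have he : (fun z : (ℝ × EuclideanSpace ℝ (Fin d) × ℝ) × EuclideanSpace ℝ (Fin d) =>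
        (⟪z.1.2.1, z.2⟫ : ℝ)) = fun z => ∑ i, z.1.2.1 i * z.2 i := by
      funext z; simp [PiLp.inner_apply, RCLike.inner_apply, mul_comm]
    rw [he]
    exact continuous_finset_sum _ fun i _ => by fun_prop
  have h2 : Continuous (fun z : (ℝ × EuclideanSpace ℝ (Fin d) × ℝ) × EuclideanSpace ℝ (Fin d) =>
      (⟪z.1.2.1, z.2⟫ + z.1.2.2 : ℝ)) := h1.add continuous_fst.snd.snd
  exact ((continuous_const : Continuous fun _ : (ℝ × EuclideanSpace ℝ (Fin d) × ℝ) ×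
    EuclideanSpace ℝ (Fin d) => (0:ℝ)).max h2).pow k

lemma sigk_continuous' (k : ℕ) (x : EuclideanSpace ℝ (Fin d)) :
    Continuous (fun p : ℝ × EuclideanSpace ℝ (Fin d) × ℝ => sigk k p x) := by
  have hm : Continuous (fun p : ℝ × EuclideanSpace ℝ (Fin d) × ℝ =>
      ((p, x) : (ℝ × EuclideanSpace ℝ (Fin d) × ℝ) × EuclideanSpace ℝ (Fin d))) :=
    continuous_id.prodMk continuous_const
  have h2 := (sigk_continuous (d := d) k).comp hm
  exact h2

/-- The rescaled outer coefficient. -/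
noncomputable def coefA {d : ℕ} (k : ℕ) (B : ℝ) (p : ℝ × EuclideanSpace ℝ (Fin d) × ℝ) : ℝ :=
  if |p.1| * nrm k p = 0 then 0 else B * p.1 / (|p.1| * nrm k p)

lemma coefA_measurable (k : ℕ) (B : ℝ) :
    Measurable (coefA k B : ℝ × EuclideanSpace ℝ (Fin d) × ℝ → ℝ) := by
  unfold coefA
  have hdm : Measurable (fun p : ℝ × EuclideanSpace ℝ (Fin d) × ℝ => |p.1| * nrm k p) :=
    (measurable_fst.abs.mul (nrm_continuous k).measurable)
  exact Measurable.ite (hdm (measurableSet_singleton 0)) measurable_const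
    ((measurable_const.mul measurable_fst).div hdm)

lemma abs_coefA_mul_nrm_le {k : ℕ} {B : ℝ} (hB : 0 < B)
    (p : ℝ × EuclideanSpace ℝ (Fin d) × ℝ) : |coefA k B p| * nrm k p ≤ B := by
  unfold coefA
  by_cases h : |p.1| * nrm k p = 0
  · simp [h, hB.le]
  · rw [if_neg h]
    have hpos : 0 < |p.1| * nrm k p :=
      lt_of_le_of_ne (mul_nonneg (abs_nonneg _) (nrm_nonneg _ _)) (Ne.symm h)
    rw [abs_div, abs_mul, abs_of_pos hB, abs_of_pos hpos]
    rw [div_mul_eq_mul_div, mul_assoc, mul_div_assoc, div_self h, mul_one]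

end Aux

section Prob

lemma integral_pi_prod {α : Type*} [MeasurableSpace α] (μ : Measure α) [SigmaFinite μ]
    (n : ℕ) (f : Fin n → α → ℝ) :
    ∫ q : Fin n → α, ∏ i, f i (q i) ∂(Measure.pi fun _ => μ) = ∏ i, ∫ x, f i x ∂μ := by
  letI : MeasureSpace α := ⟨μ⟩
  exact MeasureTheory.integral_fintype_prod_eq_prod f

lemma integral_pi_mul {α : Type*} [MeasurableSpace α] (μ : Measure α) [IsProbabilityMeasure μ]
    (n : ℕ) (g : α → ℝ) (i j : Fin n) :
    ∫ q : Fin n → α, g (q i) * g (q j) ∂(Measure.pi fun _ => μ) =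
      if i = j then ∫ a, g a * g a ∂μ else (∫ a, g a ∂μ) * (∫ a, g a ∂μ) := by
  have h1 : ∀ q : Fin n → α, g (q i) * g (q j)
      = ∏ l, ((fun l p => (if l = i then g p else 1) * (if l = j then g p else 1)) l (q l)) := by
    intro q
    simp only [Finset.prod_mul_distrib]
    rw [Finset.prod_ite_eq' Finset.univ i (fun l => g (q l)),
      Finset.prod_ite_eq' Finset.univ j (fun l => g (q l))]
    simp
  have h2 : ∫ q : Fin n → α, g (q i) * g (q j) ∂(Measure.pi fun _ => μ)
      = ∏ l, ∫ p, (if l = i then g p else 1) * (if l = j then g p else 1) ∂μ := by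
    rw [integral_congr_ae (Filter.Eventually.of_forall h1)]
    exact integral_pi_prod μ n (fun l p => (if l = i then g p else 1) * (if l = j then g p else 1))
  rw [h2]
  by_cases hij : i = j
  · subst hij
    rw [if_pos rfl]
    refine Finset.prod_eq_single i (fun l _ hl => by simp [hl, measure_univ]) (by simp)
      |>.trans ?_
    simp
  · rw [if_neg hij]
    have houter : ∀ l ∈ Finset.univ, l ∉ ({i, j} : Finset (Fin n)) →
        (∫ p, (if l = i then g p else 1) * (if l = j then g p else 1) ∂μ) = 1 := by
      intro l _ hl
      simp only [Finset.mem_insert, Finset.mem_singleton] at hl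
      push_neg at hl
      simp [hl.1, hl.2, measure_univ]
    rw [← Finset.prod_subset (Finset.subset_univ ({i, j} : Finset (Fin n))) houter,
      Finset.prod_pair hij]
    have hi : (∫ p, (if i = i then g p else 1) * (if i = j then g p else 1) ∂μ) = ∫ p, g p ∂μ := by
      simp [hij]
    have hj : (∫ p, (if j = i then g p else 1) * (if j = j then g p else 1) ∂μ) = ∫ p, g p ∂μ := by
      simp [Ne.symm hij]
    rw [hi, hj]

lemma pi_mean_sq_le {α : Type*} [MeasurableSpace α] (μ : Measure α) [IsProbabilityMeasure μ]
    (n : ℕ) (hn : 1 ≤ n) (h : α → ℝ) (hm : Measurable h) (C : ℝ) (hC : ∀ a, |h a| ≤ C)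
    (h0 : ∫ a, h a ∂μ = 0) (V : ℝ) (hV : ∫ a, h a * h a ∂μ ≤ V) :
    ∫ q : Fin n → α, ((1/(n:ℝ)) * ∑ i, h (q i))^2 ∂(Measure.pi fun _ => μ) ≤ V / n := by
  have hnpos : (0:ℝ) < n := by exact_mod_cast hn
  have hn0 : (n:ℝ) ≠ 0 := ne_of_gt hnpos
  haveI hne : Nonempty α := by
    by_contra hne
    have he : (Set.univ : Set α) = ∅ := by
      ext a; exact absurd ⟨a⟩ hne
    have h1 : (1:ℝ≥0∞) = 0 := by rw [← measure_univ (μ := μ), he, measure_empty]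
    simp at h1
  have hC0 : 0 ≤ C := le_trans (abs_nonneg _) (hC (Classical.arbitrary α))
  have hint : ∀ i j : Fin n, Integrable (fun q : Fin n → α => h (q i) * h (q j))
      (Measure.pi fun _ => μ) := by
    intro i j
    refine Integrable.mono' (integrable_const (C * C))
      ((hm.comp (measurable_pi_apply i)).mul (hm.comp (measurable_pi_apply j))).aestronglyMeasurable
      (Filter.Eventually.of_forall fun q => ?_)
    rw [Real.norm_eq_abs, abs_mul]
    exact mul_le_mul (hC _) (hC _) (abs_nonneg _) hC0
  have hexp : ∀ q : Fin n → α, ((1/(n:ℝ)) * ∑ i, h (q i))^2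
      = (1/(n:ℝ))^2 * ∑ i, ∑ j, h (q i) * h (q j) := by
    intro q
    rw [mul_pow, sq (∑ i, h (q i)), Finset.sum_mul_sum]
  have hIh : 0 ≤ ∫ a, h a * h a ∂μ :=
    integral_nonneg fun a => mul_self_nonneg _
  calc ∫ q : Fin n → α, ((1/(n:ℝ)) * ∑ i, h (q i))^2 ∂(Measure.pi fun _ => μ)
      = ∫ q : Fin n → α, (1/(n:ℝ))^2 * ∑ i, ∑ j, h (q i) * h (q j) ∂(Measure.pi fun _ => μ) :=
        integral_congr_ae (Filter.Eventually.of_forall hexp)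
    _ = (1/(n:ℝ))^2 * ∑ i, ∑ j, ∫ q : Fin n → α, h (q i) * h (q j) ∂(Measure.pi fun _ => μ) := by
        rw [integral_const_mul]
        congr 1
        rw [integral_finset_sum _ fun i _ => integrable_finset_sum _ fun j _ => hint i j]
        exact Finset.sum_congr rfl fun i _ => integral_finset_sum _ fun j _ => hint i j
    _ = (1/(n:ℝ))^2 * ∑ i : Fin n, ∑ j : Fin n,
          (if i = j then ∫ a, h a * h a ∂μ else 0) := by
        congr 1
        refine Finset.sum_congr rfl fun i _ => Finset.sum_congr rfl fun j _ => ?_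
        rw [integral_pi_mul μ n h i j, h0]
        by_cases hij : i = j <;> simp [hij]
    _ = (1/(n:ℝ))^2 * ((n:ℝ) * ∫ a, h a * h a ∂μ) := by
        congr 1
        have : ∀ i : Fin n, (∑ j : Fin n, if i = j then ∫ a, h a * h a ∂μ else 0)
            = ∫ a, h a * h a ∂μ := by
          intro i
          rw [Finset.sum_ite_eq]
          simp
        rw [Finset.sum_congr rfl fun i _ => this i, Finset.sum_const, Finset.card_univ,
          Fintype.card_fin, nsmul_eq_mul]
    _ ≤ (1/(n:ℝ))^2 * ((n:ℝ) * V) := by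
        refine mul_le_mul_of_nonneg_left ?_ (sq_nonneg _)
        exact mul_le_mul_of_nonneg_left hV hnpos.le
    _ = V / n := by
        field_simp

end Prob

section Phi

variable {d : ℕ}

/-- The rescaled neuron. -/
noncomputable def phiB {d : ℕ} (k : ℕ) (B : ℝ) (p : ℝ × EuclideanSpace ℝ (Fin d) × ℝ)
    (x : EuclideanSpace ℝ (Fin d)) : ℝ := coefA k B p * sigk k p x

lemma phiB_measurable (k : ℕ) (B : ℝ) (x : EuclideanSpace ℝ (Fin d)) :
    Measurable (fun p : ℝ × EuclideanSpace ℝ (Fin d) × ℝ => phiB k B p x) :=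
  (coefA_measurable k B).mul (sigk_continuous' k x).measurable

lemma abs_phiB_le {k : ℕ} {B : ℝ} (hB : 0 < B) (p : ℝ × EuclideanSpace ℝ (Fin d) × ℝ)
    {x : EuclideanSpace ℝ (Fin d)} (hx : x ∈ unitCube d) : |phiB k B p x| ≤ B := by
  unfold phiB
  rw [abs_mul, abs_of_nonneg (sigk_nonneg k p x)]
  calc |coefA k B p| * sigk k p x ≤ |coefA k B p| * nrm k p :=
        mul_le_mul_of_nonneg_left (sigk_le k p hx) (abs_nonneg _)
    _ ≤ B := abs_coefA_mul_nrm_le hB p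

lemma phiB_mul_dens {k : ℕ} {B : ℝ} (hB : 0 < B) (p : ℝ × EuclideanSpace ℝ (Fin d) × ℝ)
    {x : EuclideanSpace ℝ (Fin d)} (hx : x ∈ unitCube d) :
    (|p.1| * nrm k p / B) * phiB k B p x = p.1 * sigk k p x := by
  by_cases hd : |p.1| * nrm k p = 0
  · rw [hd, zero_div, zero_mul]
    rcases mul_eq_zero.1 hd with h1 | h2
    · rw [abs_eq_zero.1 h1, zero_mul]
    · have hs0 : sigk k p x = 0 :=
        le_antisymm (h2 ▸ sigk_le k p hx) (sigk_nonneg k p x)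
      rw [hs0, mul_zero]
  · unfold phiB coefA
    rw [if_neg hd]
    field_simp
    have h1 := left_ne_zero_of_mul hd
    have h2 := right_ne_zero_of_mul hd
    field_simp

end Phi

lemma integral_withDensity_ofReal {α : Type*} [MeasurableSpace α] (ρ : Measure α)
    (h : α → ℝ) (hm : Measurable h) (hnn : ∀ a, 0 ≤ h a) (g : α → ℝ) :
    ∫ a, g a ∂(ρ.withDensity (fun a => ENNReal.ofReal (h a))) = ∫ a, h a * g a ∂ρ := by
  have he : (fun a => ENNReal.ofReal (h a)) = (fun a => ((fun a => (h a).toNNReal) a : ℝ≥0∞)) := rfl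
  rw [he, integral_withDensity_eq_integral_smul (by fun_prop)]
  congr 1; ext a
  simp [NNReal.smul_def, Real.coe_toNNReal _ (hnn a)]

/-- Monte-Carlo approximation in extended Barron spaces: if `f` has the Barron
representation with Barron value `B`, then there is an `n`-neuron RePU network
`(1/n) Σ aᵢ σ_k(wᵢ·x + bᵢ)` whose path norm is at most `B` and whose `L²(Ω)`
error to `f` is at most `B²/n`. -/
theorem barron_finite_network_approx (d k n : ℕ) (hd : 1 ≤ d) (hk : 1 ≤ k) (hn : 1 ≤ n)
    (ρ : Measure (ℝ × EuclideanSpace ℝ (Fin d) × ℝ)) [IsProbabilityMeasure ρ]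
    (hint : Integrable (fun p => |p.1| * (l1Norm p.2.1 + |p.2.2|) ^ k) ρ)
    (B : ℝ) (hB : B = ∫ p, |p.1| * (l1Norm p.2.1 + |p.2.2|) ^ k ∂ρ)
    (f : EuclideanSpace ℝ (Fin d) → ℝ) (hf : Measurable f)
    (hrepr : ∀ x ∈ unitCube d, f x = ∫ p, p.1 * (max 0 (⟪p.2.1, x⟫ + p.2.2)) ^ k ∂ρ) :
    ∃ (a : Fin n → ℝ) (w : Fin n → EuclideanSpace ℝ (Fin d)) (b : Fin n → ℝ),
      (1 / (n : ℝ)) * ∑ i, |a i| * (l1Norm (w i) + |b i|) ^ k ≤ B ∧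
      ∫ x in unitCube d,
          (f x - (1 / (n : ℝ)) * ∑ i, a i * (max 0 (⟪w i, x⟫ + b i)) ^ k) ^ 2 ≤
        B ^ 2 / n := by
  classical
  have hnpos : (0:ℝ) < n := by exact_mod_cast hn
  have hn0 : (n:ℝ) ≠ 0 := ne_of_gt hnpos
  have hint' : Integrable (fun p : ℝ × EuclideanSpace ℝ (Fin d) × ℝ => |p.1| * nrm k p) ρ := hint
  have hB' : B = ∫ p, |p.1| * nrm k p ∂ρ := hB
  have hrepr' : ∀ x ∈ unitCube d, f x = ∫ p, p.1 * sigk k p x ∂ρ := hrepr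
  have hB0 : 0 ≤ B := by
    rw [hB']
    exact integral_nonneg fun p => mul_nonneg (abs_nonneg _) (nrm_nonneg _ _)
  have hfb : ∀ x ∈ unitCube d, |f x| ≤ B := by
    intro x hx
    have hintx : Integrable (fun p : ℝ × EuclideanSpace ℝ (Fin d) × ℝ => p.1 * sigk k p x) ρ := by
      refine hint'.mono' (measurable_fst.mul (sigk_continuous' k x).measurable).aestronglyMeasurable
        (Filter.Eventually.of_forall fun p => ?_)
      rw [Real.norm_eq_abs, abs_mul, abs_of_nonneg (sigk_nonneg k p x)]
      exact mul_le_mul_of_nonneg_left (sigk_le k p hx) (abs_nonneg _)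
    rw [hrepr' x hx]
    calc |∫ p, p.1 * sigk k p x ∂ρ| ≤ ∫ p, |p.1 * sigk k p x| ∂ρ := by
          have hni := norm_integral_le_integral_norm (μ := ρ) (fun p => p.1 * sigk k p x)
          simpa only [Real.norm_eq_abs] using hni
      _ ≤ ∫ p, |p.1| * nrm k p ∂ρ := by
          refine integral_mono hintx.abs hint' fun p => ?_
          rw [abs_mul, abs_of_nonneg (sigk_nonneg k p x)]
          exact mul_le_mul_of_nonneg_left (sigk_le k p hx) (abs_nonneg _)
      _ = B := hB'.symm
  rcases eq_or_lt_of_le hB0 with hB0' | hBpos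
  · -- B = 0 : the zero network works
    refine ⟨fun _ => 0, fun _ => 0, fun _ => 0, ?_, ?_⟩
    · have h0 : (1 / (n : ℝ)) * ∑ i : Fin n,
          |(0:ℝ)| * (l1Norm (0 : EuclideanSpace ℝ (Fin d)) + |(0:ℝ)|) ^ k = 0 := by
        simp
      rw [h0]
      exact hB0
    · have hf0 : ∀ x ∈ unitCube d, f x = 0 := by
        intro x hx
        have h1 : |f x| ≤ 0 := (hfb x hx).trans_eq hB0'.symm
        exact abs_eq_zero.mp (le_antisymm h1 (abs_nonneg _))
      have hz : ∫ x in unitCube d,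
          (f x - (1 / (n : ℝ)) * ∑ i : Fin n,
            (fun _ : Fin n => (0:ℝ)) i * (max 0 (⟪(fun _ : Fin n =>
              (0 : EuclideanSpace ℝ (Fin d))) i, x⟫ + (fun _ : Fin n => (0:ℝ)) i)) ^ k) ^ 2
          = 0 := by
        rw [setIntegral_congr_fun (measurableSet_unitCube d) (g := fun _ => (0:ℝ))
          (fun x hx => by simp [hf0 x hx])]
        exact integral_zero _ _
      rw [hz]
      positivity
  · -- B > 0 : Monte-Carlo sampling from the normalized measure
    set μ : Measure (ℝ × EuclideanSpace ℝ (Fin d) × ℝ) :=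
      ρ.withDensity (fun p => ENNReal.ofReal (|p.1| * nrm k p / B)) with hμdef
    have hdm : Measurable (fun p : ℝ × EuclideanSpace ℝ (Fin d) × ℝ => |p.1| * nrm k p / B) :=
      (measurable_fst.abs.mul (nrm_continuous k).measurable).div_const B
    have hdnn : ∀ p : ℝ × EuclideanSpace ℝ (Fin d) × ℝ, 0 ≤ |p.1| * nrm k p / B :=
      fun p => div_nonneg (mul_nonneg (abs_nonneg _) (nrm_nonneg _ _)) hB0
    haveI hμprob : IsProbabilityMeasure μ := by
      constructor
      rw [hμdef, withDensity_apply _ MeasurableSet.univ, Measure.restrict_univ,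
        ← ofReal_integral_eq_lintegral_ofReal (hint'.div_const B)
          (Filter.Eventually.of_forall hdnn)]
      rw [integral_div, ← hB', div_self (ne_of_gt hBpos)]
      simp
    have hcm : ∀ g : (ℝ × EuclideanSpace ℝ (Fin d) × ℝ) → ℝ,
        ∫ p, g p ∂μ = ∫ p, (|p.1| * nrm k p / B) * g p ∂ρ := by
      intro g
      rw [hμdef]
      exact integral_withDensity_ofReal ρ _ hdm hdnn g
    have hmean : ∀ x ∈ unitCube d, ∫ p, phiB k B p x ∂μ = f x := by
      intro x hx
      rw [hcm (fun p => phiB k B p x),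
        integral_congr_ae (Filter.Eventually.of_forall fun p => phiB_mul_dens hBpos p hx)]
      exact (hrepr' x hx).symm
    have hφint : ∀ x ∈ unitCube d, Integrable (fun p => phiB k B p x) μ := by
      intro x hx
      refine Integrable.mono' (integrable_const B) (phiB_measurable k B x).aestronglyMeasurable
        (Filter.Eventually.of_forall fun p => ?_)
      rw [Real.norm_eq_abs]
      exact abs_phiB_le hBpos p hx
    have hφφint : ∀ x ∈ unitCube d,
        Integrable (fun p => phiB k B p x * phiB k B p x) μ := by
      intro x hx
      refine Integrable.mono' (integrable_const (B * B))
        ((phiB_measurable k B x).mul (phiB_measurable k B x)).aestronglyMeasurable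
        (Filter.Eventually.of_forall fun p => ?_)
      rw [Real.norm_eq_abs, abs_mul]
      exact mul_le_mul (abs_phiB_le hBpos p hx) (abs_phiB_le hBpos p hx) (abs_nonneg _) hB0
    have hvar : ∀ x ∈ unitCube d,
        ∫ p, (phiB k B p x - f x) * (phiB k B p x - f x) ∂μ ≤ B ^ 2 := by
      intro x hx
      have h1 := hφint x hx
      have h2 := hφφint x hx
      have hexp : ∀ p : ℝ × EuclideanSpace ℝ (Fin d) × ℝ,
          (phiB k B p x - f x) * (phiB k B p x - f x)
          = phiB k B p x * phiB k B p x - (2 * f x) * phiB k B p x + f x * f x :=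
        fun p => by ring
      have hsub : Integrable (fun p : ℝ × EuclideanSpace ℝ (Fin d) × ℝ =>
          phiB k B p x * phiB k B p x - (2 * f x) * phiB k B p x) μ :=
        h2.sub (h1.const_mul (2 * f x))
      have hcm2 : Integrable (fun p : ℝ × EuclideanSpace ℝ (Fin d) × ℝ =>
          (2 * f x) * phiB k B p x) μ := h1.const_mul (2 * f x)
      rw [integral_congr_ae (Filter.Eventually.of_forall hexp),
        integral_add hsub (integrable_const (f x * f x)),
        integral_sub h2 hcm2, integral_const_mul, hmean x hx,
        integral_const, probReal_univ]
      have hφφ : ∫ p, phiB k B p x * phiB k B p x ∂μ ≤ B ^ 2 := by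
        refine (integral_mono h2 (integrable_const (B ^ 2)) fun p => ?_).trans ?_
        · have hb := abs_phiB_le (k := k) hBpos p hx
          calc phiB k B p x * phiB k B p x = |phiB k B p x| * |phiB k B p x| :=
                (abs_mul_abs_self _).symm
            _ ≤ B * B := mul_le_mul hb hb (abs_nonneg _) hB0
            _ = B ^ 2 := (sq B).symm
        · rw [integral_const, probReal_univ]; simp
      simp only [ENNReal.toReal_one, smul_eq_mul, one_mul]
      nlinarith [mul_self_nonneg (f x)]
    set ν : Measure (Fin n → ℝ × EuclideanSpace ℝ (Fin d) × ℝ) :=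
      Measure.pi fun _ => μ with hνdef
    haveI hνprob : IsProbabilityMeasure ν := by rw [hνdef]; infer_instance
    have hkey : ∀ x ∈ unitCube d,
        ∫ q, (f x - (1 / (n : ℝ)) * ∑ i, phiB k B (q i) x) ^ 2 ∂ν ≤ B ^ 2 / n := by
      intro x hx
      have hpt : ∀ q : Fin n → ℝ × EuclideanSpace ℝ (Fin d) × ℝ,
          (f x - (1 / (n : ℝ)) * ∑ i, phiB k B (q i) x) ^ 2
          = ((1 / (n : ℝ)) * ∑ i, (phiB k B (q i) x - f x)) ^ 2 := by
        intro q
        rw [Finset.sum_sub_distrib, Finset.sum_const, Finset.card_univ, Fintype.card_fin,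
          nsmul_eq_mul]
        field_simp
        ring
      rw [integral_congr_ae (Filter.Eventually.of_forall hpt)]
      have h2B : ∀ p : ℝ × EuclideanSpace ℝ (Fin d) × ℝ, |phiB k B p x - f x| ≤ 2 * B := by
        intro p
        calc |phiB k B p x - f x| ≤ |phiB k B p x| + |f x| := abs_sub _ _
          _ ≤ B + B := add_le_add (abs_phiB_le hBpos p hx) (hfb x hx)
          _ = 2 * B := by ring
      have hmeas : Measurable (fun p => phiB k B p x - f x) :=
        (phiB_measurable k B x).sub measurable_const
      have h0 : ∫ p, (phiB k B p x - f x) ∂μ = 0 := by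
        rw [integral_sub (hφint x hx) (integrable_const _), hmean x hx, integral_const,
          probReal_univ]
        simp
      have hres := pi_mean_sq_le μ n hn _ hmeas (2 * B) h2B h0 (B ^ 2) (hvar x hx)
      rw [hνdef]
      exact hres
    have hFm : Measurable (Function.uncurry fun (q : Fin n → ℝ × EuclideanSpace ℝ (Fin d) × ℝ)
        (x : EuclideanSpace ℝ (Fin d)) =>
        (f x - (1 / (n : ℝ)) * ∑ i, phiB k B (q i) x) ^ 2) := by
      have hsum : Measurable (fun z : (Fin n → ℝ × EuclideanSpace ℝ (Fin d) × ℝ) ×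
          EuclideanSpace ℝ (Fin d) => ∑ i, phiB k B (z.1 i) z.2) := by
        refine Finset.measurable_sum _ fun i _ => ?_
        have hz : Measurable (fun z : (Fin n → ℝ × EuclideanSpace ℝ (Fin d) × ℝ) ×
            EuclideanSpace ℝ (Fin d) =>
            ((z.1 i, z.2) : (ℝ × EuclideanSpace ℝ (Fin d) × ℝ) × EuclideanSpace ℝ (Fin d))) := by
          have h1 : Measurable (fun z : (Fin n → ℝ × EuclideanSpace ℝ (Fin d) × ℝ) ×
              EuclideanSpace ℝ (Fin d) => z.1 i) := (measurable_pi_apply i).comp measurable_fst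
          exact h1.prodMk measurable_snd
        have hA : Measurable (fun z : (Fin n → ℝ × EuclideanSpace ℝ (Fin d) × ℝ) ×
            EuclideanSpace ℝ (Fin d) => coefA k B (z.1 i)) :=
          (coefA_measurable k B).comp ((measurable_pi_apply i).comp measurable_fst)
        have hs : Measurable (fun z : (Fin n → ℝ × EuclideanSpace ℝ (Fin d) × ℝ) ×
            EuclideanSpace ℝ (Fin d) => sigk k (z.1 i) z.2) := by
          have hss := (sigk_continuous (d := d) k).measurable.comp hz
          exact hss
        have hmul := hA.mul hs
        exact hmul
      have hfx : Measurable (fun z : (Fin n → ℝ × EuclideanSpace ℝ (Fin d) × ℝ) ×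
          EuclideanSpace ℝ (Fin d) => f z.2) := hf.comp measurable_snd
      have hfin := ((hfx.sub (hsum.const_mul (1 / (n : ℝ)))).pow_const 2)
      exact hfin
    haveI hfinres : IsFiniteMeasure (volume.restrict (unitCube d)) := by
      constructor
      rw [Measure.restrict_apply_univ, volume_unitCube]
      exact ENNReal.one_lt_top
    have haeΩ : ∀ᵐ z ∂(ν.prod (volume.restrict (unitCube d))), z.2 ∈ unitCube d := by
      rw [ae_iff]
      have hseq : {z : (Fin n → ℝ × EuclideanSpace ℝ (Fin d) × ℝ) ×
          EuclideanSpace ℝ (Fin d) | ¬ z.2 ∈ unitCube d}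
          = (Set.univ : Set (Fin n → ℝ × EuclideanSpace ℝ (Fin d) × ℝ)) ×ˢ (unitCube d)ᶜ := by
        ext z; simp [Set.mem_prod]
      rw [hseq, Measure.prod_prod, Measure.restrict_apply (measurableSet_unitCube d).compl]
      simp [Set.compl_inter_self]
    have hFint : Integrable (Function.uncurry fun (q : Fin n → ℝ × EuclideanSpace ℝ (Fin d) × ℝ)
        (x : EuclideanSpace ℝ (Fin d)) =>
        (f x - (1 / (n : ℝ)) * ∑ i, phiB k B (q i) x) ^ 2)
        (ν.prod (volume.restrict (unitCube d))) := by
      refine Integrable.mono' (integrable_const ((2 * B) ^ 2)) hFm.aestronglyMeasurable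
        (haeΩ.mono fun z hz => ?_)
      have hy : |f z.2 - (1 / (n : ℝ)) * ∑ i, phiB k B (z.1 i) z.2| ≤ 2 * B := by
        have h1 : |f z.2| ≤ B := hfb z.2 hz
        have h2 : |(1 / (n : ℝ)) * ∑ i, phiB k B (z.1 i) z.2| ≤ B := by
          rw [abs_mul, abs_of_nonneg (by positivity : (0:ℝ) ≤ 1 / (n : ℝ))]
          calc (1 / (n : ℝ)) * |∑ i, phiB k B (z.1 i) z.2|
              ≤ (1 / (n : ℝ)) * ((n : ℝ) * B) := by
                refine mul_le_mul_of_nonneg_left ?_ (by positivity)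
                refine (Finset.abs_sum_le_sum_abs _ _).trans ?_
                have hsb := Finset.sum_le_card_nsmul Finset.univ
                  (fun i => |phiB k B (z.1 i) z.2|) B (fun i _ => abs_phiB_le hBpos (z.1 i) hz)
                simpa [Finset.card_univ, nsmul_eq_mul] using hsb
            _ = B := by field_simp
        calc |f z.2 - (1 / (n : ℝ)) * ∑ i, phiB k B (z.1 i) z.2|
            ≤ |f z.2| + |(1 / (n : ℝ)) * ∑ i, phiB k B (z.1 i) z.2| := abs_sub _ _
          _ ≤ B + B := add_le_add h1 h2
          _ = 2 * B := by ring
      rw [Real.norm_eq_abs, Function.uncurry_apply_pair, abs_pow]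
      exact pow_le_pow_left₀ (abs_nonneg _) hy 2
    have hswap := integral_integral_swap
      (f := fun (q : Fin n → ℝ × EuclideanSpace ℝ (Fin d) × ℝ)
        (x : EuclideanSpace ℝ (Fin d)) =>
        (f x - (1 / (n : ℝ)) * ∑ i, phiB k B (q i) x) ^ 2) hFint
    have hEint : Integrable (fun q : Fin n → ℝ × EuclideanSpace ℝ (Fin d) × ℝ =>
        ∫ x in unitCube d, (f x - (1 / (n : ℝ)) * ∑ i, phiB k B (q i) x) ^ 2) ν :=
      hFint.integral_prod_left
    obtain ⟨q₀, hq₀⟩ := exists_le_integral hEint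
    have hbound : ∫ q, (∫ x in unitCube d,
        (f x - (1 / (n : ℝ)) * ∑ i, phiB k B (q i) x) ^ 2) ∂ν ≤ B ^ 2 / n := by
      rw [hswap]
      have hle : ∫ x in unitCube d,
          (∫ q, (f x - (1 / (n : ℝ)) * ∑ i, phiB k B (q i) x) ^ 2 ∂ν)
          ≤ ∫ x in unitCube d, (B ^ 2 / (n : ℝ)) := by
        refine integral_mono_ae hFint.integral_prod_right (integrable_const _) ?_
        exact (ae_restrict_mem (measurableSet_unitCube d)).mono fun x hx => hkey x hx
      refine hle.trans ?_
      rw [setIntegral_const, measureReal_def, volume_unitCube]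
      simp
    refine ⟨fun i => coefA k B (q₀ i), fun i => (q₀ i).2.1, fun i => (q₀ i).2.2, ?_, ?_⟩
    · have hterm : ∀ i : Fin n,
          |coefA k B (q₀ i)| * (l1Norm (q₀ i).2.1 + |(q₀ i).2.2|) ^ k ≤ B :=
        fun i => abs_coefA_mul_nrm_le hBpos (q₀ i)
      calc (1 / (n : ℝ)) * ∑ i, |coefA k B (q₀ i)| * (l1Norm (q₀ i).2.1 + |(q₀ i).2.2|) ^ k
          ≤ (1 / (n : ℝ)) * ((n : ℝ) * B) := by
            refine mul_le_mul_of_nonneg_left ?_ (by positivity)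
            have hsb := Finset.sum_le_card_nsmul Finset.univ _ B (fun i _ => hterm i)
            simpa [Finset.card_univ, nsmul_eq_mul] using hsb
        _ = B := by field_simp
    · exact hq₀.trans hbound
end

section
/- Let d, k, n ≥ 1 be integers, λ > 0, and let f^δ : ℝ^d → ℝ be measurable with ∫_Ω (f^δ)² < ∞. Let Θ be the set of parameters θ = (a, w, b) with a : Fin n → ℝ, w : Fin n → ℝ^d, b : Fin n → ℝ, ‖wᵢ‖₂ = 1 and |bᵢ| ≤ √d for all i, and set J̃(θ) = ∫_Ω ( Σ_{i=1}^{n} aᵢ σ_k(wᵢ·x + bᵢ) − f^δ(x) )² dx + λ·(Σ_{i=1}^{n} |aᵢ|)². Then the infimum of J̃ over Θ is attained: there exists θ* ∈ Θ with J̃(θ*) ≤ J̃(θ) for all θ ∈ Θ. -/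
open MeasureTheory
open scoped RealInnerProductSpace

lemma unitCube_isClosed (d : ℕ) : IsClosed (unitCube d) := by
  have : unitCube d = ⋂ i, (fun x : EuclideanSpace ℝ (Fin d) => x i) ⁻¹' Set.Icc (0:ℝ) 1 := by
    ext x; simp [unitCube]
  rw [this]
  exact isClosed_iInter fun i => isClosed_Icc.preimage (PiLp.continuous_apply 2 _ i)

lemma norm_le_sqrt_of_mem_unitCube {d : ℕ} {x : EuclideanSpace ℝ (Fin d)}
    (hx : x ∈ unitCube d) : ‖x‖ ≤ Real.sqrt d := by
  rw [EuclideanSpace.norm_eq]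
  refine Real.sqrt_le_sqrt ?_
  calc ∑ i, ‖x i‖ ^ 2 ≤ ∑ _i : Fin d, (1:ℝ) := by
        refine Finset.sum_le_sum fun i _ => ?_
        have h := hx i
        rw [Real.norm_eq_abs, sq_abs]
        nlinarith [h.1, h.2]
    _ = (d : ℝ) := by simp

lemma unitCube_isCompact (d : ℕ) : IsCompact (unitCube d) := by
  refine Metric.isCompact_of_isClosed_isBounded (unitCube_isClosed d) ?_
  exact isBounded_iff_forall_norm_le.2 ⟨Real.sqrt d, fun x hx => norm_le_sqrt_of_mem_unitCube hx⟩


section Aux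

variable {E : Type*} [NormedAddCommGroup E] [InnerProductSpace ℝ E] [ProperSpace E]
  [MeasurableSpace E] [BorelSpace E]

lemma tikhonov_aux (μ : Measure E) [IsFiniteMeasure μ] (n k : ℕ) (lam : ℝ) (hlam : 0 < lam)
    (C : ℝ) (hC : 0 ≤ C) (hμC : ∀ᵐ x ∂μ, ‖x‖ ≤ C)
    (fδ : E → ℝ) (hfδ : Measurable fδ) (hf2 : Integrable (fun x => fδ x ^ 2) μ)
    (B : ℝ) (hB : 0 ≤ B) (v : E) (hv : ‖v‖ = 1) :
    ∃ (a' : Fin n → ℝ) (w' : Fin n → E) (b' : Fin n → ℝ),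
      (∀ i, ‖w' i‖ = 1 ∧ |b' i| ≤ B) ∧
      ∀ (a : Fin n → ℝ) (w : Fin n → E) (b : Fin n → ℝ),
        (∀ i, ‖w i‖ = 1 ∧ |b i| ≤ B) →
        (∫ x, ((∑ i, a' i * (max 0 (⟪w' i, x⟫ + b' i)) ^ k) - fδ x) ^ 2 ∂μ)
          + lam * (∑ i, |a' i|) ^ 2 ≤
        (∫ x, ((∑ i, a i * (max 0 (⟪w i, x⟫ + b i)) ^ k) - fδ x) ^ 2 ∂μ)
          + lam * (∑ i, |a i|) ^ 2 := by
  classical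
  set P := (Fin n → ℝ) × (Fin n → E) × (Fin n → ℝ)
  set g : P → E → ℝ :=
    fun θ x => ∑ i, θ.1 i * (max 0 (⟪θ.2.1 i, x⟫ + θ.2.2 i)) ^ k with hg_def
  set J : P → ℝ :=
    fun θ => (∫ x, (g θ x - fδ x) ^ 2 ∂μ) + lam * (∑ i, |θ.1 i|) ^ 2 with hJ_def
  -- measurability in x
  have hgx : ∀ θ : P, Continuous fun x => g θ x := by
    intro θ
    exact continuous_finset_sum _ fun i _ => continuous_const.mul
      ((continuous_const.max ((continuous_const.inner continuous_id).add continuous_const)).pow k)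
  have hmeas : ∀ θ : P, AEStronglyMeasurable (fun x => (g θ x - fδ x) ^ 2) μ :=
    fun θ => (((hgx θ).measurable.sub hfδ).pow_const 2).aestronglyMeasurable
  -- |fδ| integrable
  have hfabs : Integrable (fun x => |fδ x|) μ := by
    refine (hf2.add (integrable_const 1)).mono' hfδ.abs.aestronglyMeasurable ?_
    filter_upwards with x
    simp only [Pi.add_apply, Real.norm_eq_abs, abs_abs]
    nlinarith [sq_nonneg (|fδ x| - 1), sq_abs (fδ x)]
  -- pointwise bound on g
  have key : ∀ (A Wb Bb : ℝ), 0 ≤ A → 0 ≤ Wb → 0 ≤ Bb → ∀ θ : P,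
      (∀ i, |θ.1 i| ≤ A) → (∀ i, ‖θ.2.1 i‖ ≤ Wb) → (∀ i, |θ.2.2 i| ≤ Bb) →
      ∀ x : E, ‖x‖ ≤ C → |g θ x| ≤ (n : ℝ) * (A * (Wb * C + Bb) ^ k) := by
    intro A Wb Bb hA hW hBb θ ha hw hb x hx
    have hM : (0:ℝ) ≤ Wb * C + Bb := by positivity
    calc |g θ x| ≤ ∑ i, |θ.1 i * (max 0 (⟪θ.2.1 i, x⟫ + θ.2.2 i)) ^ k| :=
          Finset.abs_sum_le_sum_abs _ _
      _ ≤ ∑ _i : Fin n, A * (Wb * C + Bb) ^ k := by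
          refine Finset.sum_le_sum fun i _ => ?_
          rw [abs_mul]
          have hmax0 : (0:ℝ) ≤ max 0 (⟪θ.2.1 i, x⟫ + θ.2.2 i) := le_max_left _ _
          have hmaxM : max 0 (⟪θ.2.1 i, x⟫ + θ.2.2 i) ≤ Wb * C + Bb := by
            refine max_le hM ?_
            have h1 : ⟪θ.2.1 i, x⟫ ≤ ‖θ.2.1 i‖ * ‖x‖ := real_inner_le_norm _ _
            have h2 : ‖θ.2.1 i‖ * ‖x‖ ≤ Wb * C :=
              mul_le_mul (hw i) hx (norm_nonneg _) hW
            have h3 : θ.2.2 i ≤ Bb := (abs_le.1 (hb i)).2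
            linarith
          have : |(max 0 (⟪θ.2.1 i, x⟫ + θ.2.2 i)) ^ k| ≤ (Wb * C + Bb) ^ k := by
            rw [abs_pow, abs_of_nonneg hmax0]
            exact pow_le_pow_left₀ hmax0 hmaxM k
          exact mul_le_mul (ha i) this (abs_nonneg _) hA
      _ = (n : ℝ) * (A * (Wb * C + Bb) ^ k) := by
          rw [Finset.sum_const, Finset.card_univ, Fintype.card_fin, nsmul_eq_mul]
  -- continuity of J
  have hJcont : Continuous J := by
    rw [continuous_iff_continuousAt]
    intro θ₀
    refine ContinuousAt.add ?_ ?_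
    · -- integral part
      set A := ‖θ₀.1‖ + 1 with hA_def
      set Wb := ‖θ₀.2.1‖ + 1 with hW_def
      set Bb := ‖θ₀.2.2‖ + 1 with hB_def
      have hA : (0:ℝ) ≤ A := by positivity
      have hW : (0:ℝ) ≤ Wb := by positivity
      have hBb : (0:ℝ) ≤ Bb := by positivity
      set S := (n : ℝ) * (A * (Wb * C + Bb) ^ k) with hS_def
      have hev : ∀ᶠ θ : P in nhds θ₀, ‖θ.1‖ ≤ A ∧ ‖θ.2.1‖ ≤ Wb ∧ ‖θ.2.2‖ ≤ Bb := by
        have e1 : ∀ᶠ θ : P in nhds θ₀, ‖θ.1‖ < A :=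
          (continuous_fst.norm.tendsto θ₀).eventually_lt_const (by simp [hA_def])
        have e2 : ∀ᶠ θ : P in nhds θ₀, ‖θ.2.1‖ < Wb :=
          ((continuous_fst.comp continuous_snd).norm.tendsto θ₀).eventually_lt_const
            (by simp [hW_def])
        have e3 : ∀ᶠ θ : P in nhds θ₀, ‖θ.2.2‖ < Bb :=
          ((continuous_snd.comp continuous_snd).norm.tendsto θ₀).eventually_lt_const
            (by simp [hB_def])
        filter_upwards [e1, e2, e3] with θ h1 h2 h3
        exact ⟨h1.le, h2.le, h3.le⟩
      refine continuousAt_of_dominated (bound := fun x => S ^ 2 + 2 * S * |fδ x| + fδ x ^ 2)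
        (Filter.Eventually.of_forall hmeas) ?_ ?_ ?_
      · filter_upwards [hev] with θ hθ
        filter_upwards [hμC] with x hx
        have hgb : |g θ x| ≤ S := by
          refine key A Wb Bb hA hW hBb θ ?_ ?_ ?_ x hx
          · exact fun i => (norm_le_pi_norm θ.1 i).trans hθ.1
          · exact fun i => (norm_le_pi_norm θ.2.1 i).trans hθ.2.1
          · exact fun i => (norm_le_pi_norm θ.2.2 i).trans hθ.2.2
        rw [Real.norm_eq_abs, abs_of_nonneg (sq_nonneg _)]
        nlinarith [le_abs_self (g θ x), neg_abs_le (g θ x),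
          le_abs_self (fδ x), neg_abs_le (fδ x), abs_nonneg (fδ x), abs_nonneg (g θ x)]
      · exact ((integrable_const _).add ((hfabs.const_mul (2 * S)))).add hf2
      · refine Filter.Eventually.of_forall fun x => ?_
        have hgθ : Continuous fun θ : P => g θ x := by
          refine continuous_finset_sum _ fun i _ => ?_
          refine (((continuous_apply i).comp continuous_fst)).mul ?_
          refine (continuous_const.max ?_).pow k
          exact (((continuous_apply i).comp (continuous_fst.comp continuous_snd)).inner
            continuous_const).add ((continuous_apply i).comp (continuous_snd.comp continuous_snd))
        exact ((hgθ.sub continuous_const).pow 2).continuousAt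
    · exact (continuous_const.mul ((continuous_finset_sum _ fun i _ =>
        ((continuous_apply i).comp continuous_fst).abs).pow 2)).continuousAt
  -- reference point and radius
  set θref : P := (fun _ => 0, fun _ => v, fun _ => 0) with hθref_def
  have hIntNonneg : ∀ θ : P, 0 ≤ ∫ x, (g θ x - fδ x) ^ 2 ∂μ :=
    fun θ => integral_nonneg fun x => sq_nonneg _
  have hJref_nonneg : 0 ≤ J θref := by
    have : (0:ℝ) ≤ lam * (∑ i : Fin n, |(θref.1 i)|) ^ 2 := by positivity
    have h := hIntNonneg θref
    simp only [hJ_def]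
    linarith
  set R := Real.sqrt (J θref / lam) + 1 with hR_def
  have hRnn : (0:ℝ) ≤ R := by positivity
  have hR2 : J θref ≤ lam * R ^ 2 := by
    have hs : Real.sqrt (J θref / lam) ^ 2 = J θref / lam :=
      Real.sq_sqrt (div_nonneg hJref_nonneg hlam.le)
    have hsnn : 0 ≤ Real.sqrt (J θref / lam) := Real.sqrt_nonneg _
    have : J θref / lam ≤ R ^ 2 := by nlinarith
    calc J θref = lam * (J θref / lam) := by field_simp
      _ ≤ lam * R ^ 2 := by nlinarith
  -- compact set
  set K : Set P := (Set.pi Set.univ fun _ : Fin n => Set.Icc (-R) R) ×ˢ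
      ((Set.pi Set.univ fun _ : Fin n => Metric.sphere (0:E) 1) ×ˢ
       (Set.pi Set.univ fun _ : Fin n => Set.Icc (-B) B)) with hK_def
  have hKc : IsCompact K :=
    (isCompact_univ_pi fun _ => isCompact_Icc).prod
      ((isCompact_univ_pi fun _ => isCompact_sphere 0 1).prod
       (isCompact_univ_pi fun _ => isCompact_Icc))
  have hrefK : θref ∈ K := by
    refine ⟨fun i _ => ?_, fun i _ => ?_, fun i _ => ?_⟩
    · exact ⟨neg_nonpos_of_nonneg hRnn, hRnn⟩
    · simpa [mem_sphere_zero_iff_norm] using hv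
    · exact ⟨neg_nonpos_of_nonneg hB, hB⟩
  obtain ⟨θs, hθsK, hθsmin⟩ := hKc.exists_isMinOn ⟨θref, hrefK⟩ hJcont.continuousOn
  have hθs_w : ∀ i, ‖θs.2.1 i‖ = 1 := by
    intro i
    have := hθsK.2.1 i (Set.mem_univ i)
    simpa [mem_sphere_zero_iff_norm] using this
  have hθs_b : ∀ i, |θs.2.2 i| ≤ B := by
    intro i
    have := hθsK.2.2 i (Set.mem_univ i)
    exact abs_le.2 this
  refine ⟨θs.1, θs.2.1, θs.2.2, fun i => ⟨hθs_w i, hθs_b i⟩, ?_⟩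
  intro a w b hadm
  have hgoal : J θs ≤ J (a, w, b) := by
    by_cases hcase : ∀ i, |a i| ≤ R
    · refine hθsmin ⟨fun i _ => abs_le.1 (hcase i), fun i _ => ?_, fun i _ => ?_⟩
      · simpa [mem_sphere_zero_iff_norm] using (hadm i).1
      · exact abs_le.1 (hadm i).2
    · push_neg at hcase
      obtain ⟨i, hi⟩ := hcase
      have hsum : R ≤ ∑ j, |a j| := by
        have h1 : |a i| ≤ ∑ j, |a j| :=
          Finset.single_le_sum (fun j _ => abs_nonneg (a j)) (Finset.mem_univ i)
        linarith
      have h2 : lam * R ^ 2 ≤ lam * (∑ j, |a j|) ^ 2 :=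
        mul_le_mul_of_nonneg_left (pow_le_pow_left₀ hRnn hsum 2) hlam.le
      have h3 : J θs ≤ J θref := hθsmin hrefK
      have h4 := hIntNonneg (a, w, b)
      simp only [hJ_def] at h3 h4 ⊢
      have := hR2
      simp only [hJ_def] at this
      linarith
  have heta : (θs.1, θs.2.1, θs.2.2) = θs := rfl
  calc (∫ x, ((∑ i, θs.1 i * (max 0 (⟪θs.2.1 i, x⟫ + θs.2.2 i)) ^ k) - fδ x) ^ 2 ∂μ)
        + lam * (∑ i, |θs.1 i|) ^ 2 = J θs := rfl
    _ ≤ J (a, w, b) := hgoal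
    _ = _ := rfl

end Aux

/-- Existence of a minimizer of the Tikhonov functional with variation norm penalty
`J̃(θ) = ∫_Ω (Σ aᵢ σ_k(wᵢ·x+bᵢ) − f^δ)² + λ (Σ |aᵢ|)²` over the compactly
constrained parameter set `‖wᵢ‖₂ = 1`, `|bᵢ| ≤ √d`. -/
theorem tikhonov_variation_minimizer_exists (d k n : ℕ) (hd : 1 ≤ d) (hk : 1 ≤ k)
    (hn : 1 ≤ n) (lam : ℝ) (hlam : 0 < lam)
    (fδ : EuclideanSpace ℝ (Fin d) → ℝ) (hfδ : Measurable fδ)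
    (hfδ2 : Integrable (fun x => (fδ x) ^ 2) (volume.restrict (unitCube d))) :
    ∃ (a' : Fin n → ℝ) (w' : Fin n → EuclideanSpace ℝ (Fin d)) (b' : Fin n → ℝ),
      (∀ i, ‖w' i‖ = 1 ∧ |b' i| ≤ Real.sqrt d) ∧
      ∀ (a : Fin n → ℝ) (w : Fin n → EuclideanSpace ℝ (Fin d)) (b : Fin n → ℝ),
        (∀ i, ‖w i‖ = 1 ∧ |b i| ≤ Real.sqrt d) →
        (∫ x in unitCube d,
            ((∑ i, a' i * (max 0 (⟪w' i, x⟫ + b' i)) ^ k) - fδ x) ^ 2) +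
          lam * (∑ i, |a' i|) ^ 2 ≤
        (∫ x in unitCube d,
            ((∑ i, a i * (max 0 (⟪w i, x⟫ + b i)) ^ k) - fδ x) ^ 2) +
          lam * (∑ i, |a i|) ^ 2 := by
  haveI : IsFiniteMeasure (volume.restrict (unitCube d)) :=
    ⟨by rw [Measure.restrict_apply_univ]; exact (unitCube_isCompact d).measure_lt_top⟩
  have hae : ∀ᵐ x ∂(volume.restrict (unitCube d)), ‖x‖ ≤ Real.sqrt d := by
    filter_upwards [ae_restrict_mem (unitCube_isClosed d).measurableSet] with x hx
    exact norm_le_sqrt_of_mem_unitCube hx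
  exact tikhonov_aux (volume.restrict (unitCube d)) n k lam hlam (Real.sqrt d)
    (Real.sqrt_nonneg _) hae fδ hfδ hfδ2 (Real.sqrt d) (Real.sqrt_nonneg _)
    (EuclideanSpace.single ⟨0, hd⟩ 1) (by simp [EuclideanSpace.norm_single])
end
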